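/- Define, for δ ∈ (0,1/2), the surface integrals A_x(δ) = −∫_{∂B₁} χ_{p_δ>0} x² dS, A_y(δ) = −∫_{∂B₁} χ_{p_δ>0} y² dS, and A(δ) = −∫_{∂B₁} χ_{p_δ>0} dS, where p_δ = (1/2+δ)x² + (1/2−δ)y² − z². Then (1+2δ)·(3A_y(δ)−A(δ))/(3A_x(δ)−A(δ)) − 1 + 2δ ≤ 4δ for all δ ∈ (0,1/2). -/

import Mathlib

/-! Swapping two coordinates `x_i ↔ x_j` is an isometry of the sphere, and for the diagonal form
`p = Σ a_k x_k²` it changes `p` by `(a_i - a_j)(x_j² - x_i²)`. Averaging over the swap shows that the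
moments `I_k = ∫ χ_{p>0} x_k² dS` satisfy `I_j ≤ I_i` whenever `a_j ≤ a_i`; for `p_δ` this gives
`I_y, I_z ≤ I_x`. As `x² + y² + z² = 1` on the sphere, `A = -(I_x + I_y + I_z)`, so the denominator
`3A_x - A = I_y + I_z - 2I_x` is nonpositive and the numerator exceeds it by `3(I_x - I_y) ≥ 0`: the
ratio is at most `1`. All integrals are genuine because the sphere, a Lipschitz image of a square
under spherical coordinates, has finite `μH[2]`-measure. -/

open MeasureTheory Metric

noncomputable section

abbrev E3 := EuclideanSpace ℝ (Fin 3)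

/-- The family `p_δ(x,y,z) = (1/2+δ)x² + (1/2−δ)y² − z²`. -/
def pdelta (δ : ℝ) (v : E3) : ℝ :=
  (1/2 + δ) * (v 0) ^ 2 + (1/2 - δ) * (v 1) ^ 2 - (v 2) ^ 2

/-- `A_x(δ) = −∫_{∂B₁} χ_{p_δ>0} x² dS` (surface measure = 2-dimensional Hausdorff
measure on the unit sphere of `ℝ³`). -/
def Ax (δ : ℝ) : ℝ :=
  -∫ v in sphere (0 : E3) 1, (if 0 < pdelta δ v then (v 0) ^ 2 else 0) ∂μH[2]

/-- `A_y(δ) = −∫_{∂B₁} χ_{p_δ>0} y² dS`. -/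
def Ay (δ : ℝ) : ℝ :=
  -∫ v in sphere (0 : E3) 1, (if 0 < pdelta δ v then (v 1) ^ 2 else 0) ∂μH[2]

/-- `A(δ) = −∫_{∂B₁} χ_{p_δ>0} dS`. -/
def Atot (δ : ℝ) : ℝ :=
  -∫ v in sphere (0 : E3) 1, (if 0 < pdelta δ v then (1 : ℝ) else 0) ∂μH[2]

open scoped ENNReal

section Rearrangement

variable {X : Type*} [MeasurableSpace X] {μ : Measure X}

theorem MeasureTheory.Integrable.ite_pos {p f : X → ℝ} (hf : Integrable f μ)
    (hp : Measurable p) : Integrable (fun x => if 0 < p x then f x else 0) μ := by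
  have hs : MeasurableSet {x | 0 < p x} := measurableSet_lt measurable_const hp
  refine (hf.indicator hs).congr (.of_forall fun x => ?_)
  simp [Set.indicator_apply]

theorem integral_nonneg_of_add_comp_nonneg {σ : X → X} (hσ : MeasurePreserving σ μ μ)
    (hσe : MeasurableEmbedding σ) {u : X → ℝ} (hu : Integrable u μ)
    (h : ∀ x, 0 ≤ u x + u (σ x)) : 0 ≤ ∫ x, u x ∂μ := by
  have hsum : 0 ≤ ∫ x, (u x + u (σ x)) ∂μ := integral_nonneg h
  have huσ : Integrable (fun x => u (σ x)) μ := (hσ.integrable_comp_emb hσe).2 hu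
  rw [integral_add hu huσ, hσ.integral_comp hσe u] at hsum
  linarith

/-- Symmetrising over the involution `σ`, the difference of the two sides is half the integral of
`(χ_{p>0} - χ_{p∘σ>0}) (f - f∘σ)`, which is pointwise nonnegative. -/
theorem integral_ite_pos_comp_le {σ : X → X} (hσ : MeasurePreserving σ μ μ)
    (hσe : MeasurableEmbedding σ) (hinv : Function.Involutive σ) {p f : X → ℝ}
    (hp : Measurable p) (hf : Integrable f μ)
    (hpf : ∀ x, 0 ≤ (p x - p (σ x)) * (f x - f (σ x))) :
    ∫ x, (if 0 < p x then f (σ x) else 0) ∂μ ≤ ∫ x, (if 0 < p x then f x else 0) ∂μ := by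
  have hfσ : Integrable (fun x => f (σ x)) μ := (hσ.integrable_comp_emb hσe).2 hf
  set u : X → ℝ := fun x => if 0 < p x then f x - f (σ x) else 0
  have hu : ∫ x, u x ∂μ = ∫ x, (if 0 < p x then f x else 0) ∂μ
      - ∫ x, (if 0 < p x then f (σ x) else 0) ∂μ := by
    rw [← integral_sub (hf.ite_pos hp) (hfσ.ite_pos hp)]
    congr 1 with x
    simp only [u]
    split_ifs <;> ring
  have hnonneg : 0 ≤ ∫ x, u x ∂μ := by
    refine integral_nonneg_of_add_comp_nonneg hσ hσe ((hf.sub hfσ).ite_pos hp) fun x => ?_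
    have := hpf x
    simp only [u, hinv x]
    split_ifs <;> nlinarith
  linarith

end Rearrangement

theorem LinearIsometryEquiv.measurePreserving_restrict_sphere {E : Type*}
    [NormedAddCommGroup E] [NormedSpace ℝ E] [MeasurableSpace E] [BorelSpace E]
    (e : E ≃ₗᵢ[ℝ] E) (d r : ℝ) :
    MeasurePreserving e (μH[d].restrict (sphere 0 r)) (μH[d].restrict (sphere 0 r)) := by
  have h := (e.toIsometryEquiv.measurePreserving_hausdorffMeasure d).restrict_preimage_emb
    e.toHomeomorph.measurableEmbedding (sphere 0 r)
  have hpre : (e.toIsometryEquiv : E → E) ⁻¹' sphere 0 r = sphere 0 r := by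
    ext v
    simp
  rwa [hpre] at h

section DiagonalQuadraticForm

variable {ι : Type*} [Fintype ι] [DecidableEq ι]

def coordSwap (i j : ι) : EuclideanSpace ℝ ι ≃ₗᵢ[ℝ] EuclideanSpace ℝ ι :=
  LinearIsometryEquiv.piLpCongrLeft 2 ℝ ℝ (Equiv.swap i j)

theorem coordSwap_apply (i j k : ι) (v : EuclideanSpace ℝ ι) :
    coordSwap i j v k = v (Equiv.swap i j k) := by
  simp [coordSwap, LinearIsometryEquiv.piLpCongrLeft_apply, Equiv.piCongrLeft'_apply]

theorem coordSwap_involutive (i j : ι) : Function.Involutive (coordSwap i j) := fun v => by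
  ext k
  simp [coordSwap_apply]

theorem sum_mul_sq_sub_sum_mul_sq_coordSwap (a : ι → ℝ) (i j : ι) (v : EuclideanSpace ℝ ι) :
    ∑ k, a k * v k ^ 2 - ∑ k, a k * coordSwap i j v k ^ 2
      = (a i - a j) * (v i ^ 2 - v j ^ 2) := by
  rcases eq_or_ne i j with rfl | hij
  · simp [coordSwap_apply]
  have hreindex : ∑ k, a k * coordSwap i j v k ^ 2 = ∑ k, a (Equiv.swap i j k) * v k ^ 2 := by
    simp only [coordSwap_apply]
    exact Fintype.sum_equiv (Equiv.swap i j) _ _ fun k => by simp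
  rw [hreindex, ← Finset.sum_sub_distrib,
    Fintype.sum_eq_add i j hij fun k hk => by simp [Equiv.swap_apply_of_ne_of_ne hk.1 hk.2]]
  simp only [Equiv.swap_apply_left, Equiv.swap_apply_right]
  ring

theorem integral_ite_pos_quadratic_sq_le {μ : Measure (EuclideanSpace ℝ ι)} {i j : ι}
    (hμ : MeasurePreserving (coordSwap i j) μ μ) (hint : Integrable (fun v => v i ^ 2) μ)
    {a : ι → ℝ} (ha : a j ≤ a i) :
    ∫ v, (if 0 < ∑ k, a k * v k ^ 2 then v j ^ 2 else 0) ∂μ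
      ≤ ∫ v, (if 0 < ∑ k, a k * v k ^ 2 then v i ^ 2 else 0) ∂μ := by
  have hj : ∀ v : EuclideanSpace ℝ ι, v j ^ 2 = coordSwap i j v i ^ 2 := fun v => by
    simp [coordSwap_apply]
  simp only [hj]
  refine integral_ite_pos_comp_le hμ (coordSwap i j).toHomeomorph.measurableEmbedding
    (coordSwap_involutive i j) (by fun_prop) hint fun v => ?_
  rw [sum_mul_sq_sub_sum_mul_sq_coordSwap, ← hj]
  nlinarith [sq_nonneg (v i ^ 2 - v j ^ 2)]

end DiagonalQuadraticForm

def sphericalCoords (a : Fin 2 → ℝ) : E3 :=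
  !₂[Real.sin (a 0) * Real.cos (a 1), Real.sin (a 0) * Real.sin (a 1), Real.cos (a 0)]

theorem contDiff_sphericalCoords : ContDiff ℝ 1 sphericalCoords :=
  PiLp.contDiff_toLp.comp <| contDiff_pi.2 fun k => by
    fin_cases k <;> simp only [Fin.zero_eta, Fin.mk_one, Fin.reduceFinMk, Matrix.cons_val] <;> fun_prop

theorem sphere_subset_image_sphericalCoords :
    sphere (0 : E3) 1 ⊆ sphericalCoords '' Set.Icc (-4) 4 := by
  intro v hv
  have hsum : v 0 ^ 2 + v 1 ^ 2 + v 2 ^ 2 = 1 := by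
    have := EuclideanSpace.real_norm_sq_eq v
    rw [mem_sphere_zero_iff_norm.1 hv, Fin.sum_univ_three] at this
    linarith
  set z : ℂ := ⟨v 0, v 1⟩
  have hz : Real.sin (Real.arccos (v 2)) = ‖z‖ := by
    rw [Real.sin_arccos, Complex.norm_def, Complex.normSq_mk]
    congr 1; linarith
  have hv2 : -1 ≤ v 2 ∧ v 2 ≤ 1 := by constructor <;> nlinarith [sq_nonneg (v 0), sq_nonneg (v 1)]
  refine ⟨![Real.arccos (v 2), z.arg], ⟨fun k => ?_, fun k => ?_⟩, ?_⟩
  · fin_cases k <;> simp only [Fin.zero_eta, Fin.mk_one, Matrix.cons_val, Pi.neg_apply, Pi.ofNat_apply]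
    · linarith [Real.arccos_nonneg (v 2)]
    · linarith [Complex.neg_pi_lt_arg z, Real.pi_le_four]
  · fin_cases k <;> simp only [Fin.zero_eta, Fin.mk_one, Matrix.cons_val, Pi.ofNat_apply]
    · linarith [Real.arccos_le_pi (v 2), Real.pi_le_four]
    · linarith [Complex.arg_le_pi z, Real.pi_le_four]
  · ext k
    fin_cases k
    · simp [sphericalCoords, hz, Complex.norm_mul_cos_arg, z]
    · simp [sphericalCoords, hz, Complex.norm_mul_sin_arg, z]
    · simp [sphericalCoords, Real.cos_arccos hv2.1 hv2.2]

theorem hausdorffMeasure_sphere_lt_top : μH[2] (sphere (0 : E3) 1) < ∞ := by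
  obtain ⟨K, hK⟩ := contDiff_sphericalCoords.contDiffOn.exists_lipschitzOnWith one_ne_zero
    (convex_Icc (-4 : Fin 2 → ℝ) 4) isCompact_Icc
  have hbox : μH[2] (Set.Icc (-4 : Fin 2 → ℝ) 4) < ∞ := by
    have hvol : (μH[2] : Measure (Fin 2 → ℝ)) = volume := by
      simpa using hausdorffMeasure_pi_real (ι := Fin 2)
    exact hvol ▸ isCompact_Icc.measure_lt_top
  calc μH[2] (sphere (0 : E3) 1) ≤ μH[2] (sphericalCoords '' Set.Icc (-4) 4) :=
        measure_mono sphere_subset_image_sphericalCoords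
    _ ≤ (K : ℝ≥0∞) ^ (2 : ℝ) * μH[2] (Set.Icc (-4 : Fin 2 → ℝ) 4) :=
        hK.hausdorffMeasure_image_le zero_le_two
    _ < ∞ := ENNReal.mul_lt_top (by simp) hbox

section UnitSphere

variable {ι : Type*} [Fintype ι]

theorem EuclideanSpace.sum_sq_eq_one_of_mem_sphere {v : EuclideanSpace ℝ ι}
    (hv : v ∈ sphere 0 1) : ∑ k, v k ^ 2 = 1 := by
  rw [← EuclideanSpace.real_norm_sq_eq, mem_sphere_zero_iff_norm.1 hv, one_pow]

theorem integrableOn_sphere_sq_apply {d : ℝ} (h : μH[d] (sphere (0 : EuclideanSpace ℝ ι) 1) ≠ ∞)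
    (k : ι) : IntegrableOn (fun v : EuclideanSpace ℝ ι => v k ^ 2) (sphere 0 1) μH[d] := by
  refine Measure.integrableOn_of_bounded h (by fun_prop : Continuous _).aestronglyMeasurable
    (M := 1) ((ae_restrict_iff' isClosed_sphere.measurableSet).2 (.of_forall fun v hv => ?_))
  have hk : |v k| ≤ 1 := (PiLp.norm_apply_le v k).trans (mem_sphere_zero_iff_norm.1 hv).le
  simpa using hk

theorem setIntegral_sphere_ite_pos_one {μ : Measure (EuclideanSpace ℝ ι)}
    {p : EuclideanSpace ℝ ι → ℝ}
    (hint : ∀ k, IntegrableOn (fun v => if 0 < p v then v k ^ 2 else 0) (sphere 0 1) μ) :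
    ∫ v in sphere 0 1, (if 0 < p v then (1 : ℝ) else 0) ∂μ
      = ∑ k, ∫ v in sphere 0 1, (if 0 < p v then v k ^ 2 else 0) ∂μ := by
  rw [← integral_finsetSum _ fun k _ => hint k]
  refine setIntegral_congr_fun isClosed_sphere.measurableSet fun v hv => ?_
  by_cases hp : 0 < p v <;> simp [hp, EuclideanSpace.sum_sq_eq_one_of_mem_sphere hv]

end UnitSphere

def sphereMoment (δ : ℝ) (k : Fin 3) : ℝ :=
  ∫ v in sphere (0 : E3) 1, (if 0 < pdelta δ v then v k ^ 2 else 0) ∂μH[2]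

theorem pdelta_eq_sum (δ : ℝ) (v : E3) :
    pdelta δ v = ∑ k, ![1/2 + δ, 1/2 - δ, -1] k * v k ^ 2 := by
  simp only [pdelta, Fin.sum_univ_three, Matrix.cons_val]
  ring

theorem sphereMoment_le {δ : ℝ} {i j : Fin 3}
    (hij : ![1/2 + δ, 1/2 - δ, -1] j ≤ ![1/2 + δ, 1/2 - δ, -1] i) :
    sphereMoment δ j ≤ sphereMoment δ i := by
  simp only [sphereMoment, pdelta_eq_sum]
  exact integral_ite_pos_quadratic_sq_le
    ((coordSwap i j).measurePreserving_restrict_sphere 2 1)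
    (integrableOn_sphere_sq_apply hausdorffMeasure_sphere_lt_top.ne i) hij

theorem Atot_eq_neg_sum (δ : ℝ) : Atot δ = -∑ k, sphereMoment δ k := by
  rw [Atot, setIntegral_sphere_ite_pos_one fun k =>
    (integrableOn_sphere_sq_apply hausdorffMeasure_sphere_lt_top.ne k).ite_pos
      (by unfold pdelta; fun_prop)]
  rfl

theorem Ax_eq (δ : ℝ) : Ax δ = -sphereMoment δ 0 := rfl

theorem Ay_eq (δ : ℝ) : Ay δ = -sphereMoment δ 1 := rfl

theorem div_le_one_of_nonpos_of_le {a b : ℝ} (hb : b ≤ 0) (hba : b ≤ a) : a / b ≤ 1 := by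
  rcases hb.lt_or_eq with hb | rfl
  · exact (div_le_one_of_neg hb).2 hba
  · simp

/-- `(1+2δ)·(3A_y(δ)−A(δ))/(3A_x(δ)−A(δ)) − 1 + 2δ ≤ 4δ` for all `δ ∈ (0,1/2)`. -/
theorem stmt6 (δ : ℝ) (hδ : δ ∈ Set.Ioo (0 : ℝ) (1/2)) :
    (1 + 2*δ) * (3 * Ay δ - Atot δ) / (3 * Ax δ - Atot δ) - 1 + 2*δ ≤ 4*δ := by
  have h10 : sphereMoment δ 1 ≤ sphereMoment δ 0 := sphereMoment_le (by simp only [Matrix.cons_val]; linarith [hδ.1])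
  have h20 : sphereMoment δ 2 ≤ sphereMoment δ 0 := sphereMoment_le (by simp only [Matrix.cons_val]; linarith [hδ.1])
  have hratio : (3 * Ay δ - Atot δ) / (3 * Ax δ - Atot δ) ≤ 1 := by
    rw [Ax_eq, Ay_eq, Atot_eq_neg_sum, Fin.sum_univ_three]
    exact div_le_one_of_nonpos_of_le (by linarith) (by linarith)
  rw [mul_div_assoc]
  nlinarith [hδ.1]

end
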